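/- arXiv:0712.2792 — 3 statements merged into one kernel-verified Lean document; each statement's English description precedes it below -/
import Mathlib

section
/- Let q be a fixed permutation pattern of length k, let n ≥ 2k−1, and let I_1 and I_2 be two sets of k positions in {1,…,n} with |I_1 ∩ I_2| = 1. Suppose that, if both I_1 and I_2 were to form occurrences of q, the common position would hold the a-th smallest entry among the positions of I_1 and the b-th smallest entry among the positions of I_2. Then the probability that, in a uniformly random permutation of length n, the entries in the positions of I_1 and the entries in the positions of I_2 both form occurrences of q equals (1/(2k−1)!)·C(a+b−2, a−1)·C(2k−a−b, k−a). -/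
open Finset Filter

/-- The entries of the permutation `p` (of length `n`) in the positions of the set `I`
form an occurrence of the pattern `q` (a permutation of length `k`): there is a strictly
increasing sequence of `k` positions, all belonging to `I`, on which the entries of `p`
are order-isomorphic to `q`.  When `I` has exactly `k` elements, the sequence is forced
to be the increasing enumeration `i₁ < i₂ < ⋯ < i_k` of `I`, so this says
`q j < q r ↔ p i_j < p i_r` for all `j, r`. -/
def occursIn {k n : ℕ} (q : Equiv.Perm (Fin k)) (p : Equiv.Perm (Fin n))
    (I : Finset (Fin n)) : Prop :=
  ∃ ι : Fin k → Fin n, (∀ a b : Fin k, a < b → ι a < ι b) ∧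
    (∀ j : Fin k, ι j ∈ I) ∧ (∀ j r : Fin k, q j < q r ↔ p (ι j) < p (ι r))

instance {k n : ℕ} (q : Equiv.Perm (Fin k)) (p : Equiv.Perm (Fin n)) (I : Finset (Fin n)) :
    Decidable (occursIn q p I) := by
  unfold occursIn; exact inferInstance

/-!
Whether both occurrences happen depends only on the relative order of the entries of `p` at the
`2k - 1` positions of `J = I₁ ∪ I₂`, i.e. on the standardization of `p` on `J`; this is
uniformly distributed on `S_{2k-1}`, since composing `p` on the right with a permutation `ρ` of
the positions of `J` multiplies its standardization on the right by `ρ`. A permutation `σ` of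
`Fin (2k - 1)` carrying both occurrences is determined by the set `V` of its values on `I₁`: on
`I₁` and on `I₂` it lists `V` and `{σ x} ∪ Vᶜ` in the order prescribed by `q`. The common value
`σ x` has `a - 1` elements of `V` and `b - 1` elements of `Vᶜ` below it, so it is the
`(a + b - 1)`-th smallest value, and `V` is an arbitrary `k`-set containing it with exactly
`a - 1` smaller elements: `C(a+b-2, a-1) · C(2k-a-b, k-a)` choices.
-/

open Equiv

section Rank

variable {α : Type*} [LinearOrder α]

theorem card_filter_lt_orderEmbOfFin {k : ℕ} (V : Finset α) (h : V.card = k) (i : Fin k) :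
    #{w ∈ V | w < V.orderEmbOfFin h i} = i := by
  have hV : {w ∈ V | w < V.orderEmbOfFin h i} = (Iio i).map (V.orderEmbOfFin h).toEmbedding := by
    ext w
    constructor
    · intro hw
      obtain ⟨hwV, hlt⟩ := mem_filter.1 hw
      obtain ⟨j, rfl⟩ : w ∈ Set.range (V.orderEmbOfFin h) := by simpa using hwV
      simpa using hlt
    · simp only [Finset.mem_map, mem_Iio, mem_filter]
      rintro ⟨j, hj, rfl⟩
      simpa using hj
  rw [hV, card_map, Fin.card_Iio]

theorem orderEmbOfFin_eq_of_card_filter_lt {k : ℕ} {V : Finset α} (h : V.card = k) {i : Fin k}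
    {v : α} (hv : v ∈ V) (hrank : #{w ∈ V | w < v} = i) : V.orderEmbOfFin h i = v := by
  obtain ⟨j, rfl⟩ : v ∈ Set.range (V.orderEmbOfFin h) := by simpa using hv
  rw [card_filter_lt_orderEmbOfFin] at hrank
  rw [Fin.ext hrank]

end Rank

theorem card_filter_lt_add_card_filter_compl_lt {s : ℕ} (V : Finset (Fin s)) (v : Fin s) :
    #{w ∈ V | w < v} + #{w ∈ Vᶜ | w < v} = v := by
  rw [← card_union_of_disjoint (disjoint_filter_filter disjoint_compl_right), ← filter_union,
    union_compl, filter_gt_eq_Iio, Fin.card_Iio]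

theorem card_finsets_with_element_of_rank {s k α : ℕ} (hα : α < k) (v : Fin s) :
    #{V : Finset (Fin s) | V.card = k ∧ v ∈ V ∧ #{w ∈ V | w < v} = α} =
      (v : ℕ).choose α * (s - 1 - v).choose (k - 1 - α) := by
  have hdecomp : ∀ V : Finset (Fin s), v ∈ V →
      insert v ({w ∈ V | w < v} ∪ {w ∈ V | v < w}) = V :=
    fun V hv => by ext w; grind
  have hlt : ∀ S T : Finset (Fin s), S ⊆ Iio v → T ⊆ Ioi v →
      {w ∈ insert v (S ∪ T) | w < v} = S :=
    fun S T hS hT => by ext w; grind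
  have hgt : ∀ S T : Finset (Fin s), S ⊆ Iio v → T ⊆ Ioi v →
      {w ∈ insert v (S ∪ T) | v < w} = T :=
    fun S T hS hT => by ext w; grind
  have hcard : ∀ S T : Finset (Fin s), S ⊆ Iio v → T ⊆ Ioi v →
      #(insert v (S ∪ T)) = #S + #T + 1 := by
    intro S T hS hT
    rw [card_insert_of_notMem (by grind), card_union_of_disjoint (disjoint_left.2 (by grind))]
  have hsplit : #{V : Finset (Fin s) | V.card = k ∧ v ∈ V ∧ #{w ∈ V | w < v} = α} =
      #((Iio v).powersetCard α ×ˢ (Ioi v).powersetCard (k - 1 - α)) := by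
    refine card_nbij' (fun V => ({w ∈ V | w < v}, {w ∈ V | v < w}))
      (fun ST => insert v (ST.1 ∪ ST.2)) ?_ ?_ ?_ ?_
    · intro V hV
      simp only [coe_filter, mem_univ, true_and, Set.mem_ofPred_eq] at hV
      obtain ⟨hVk, hv, hVα⟩ := hV
      have hS : {w ∈ V | w < v} ⊆ Iio v := by intro w; simp +contextual
      have hT : {w ∈ V | v < w} ⊆ Ioi v := by intro w; simp +contextual
      have := hcard _ _ hS hT
      rw [hdecomp V hv] at this
      simp only [coe_product, Set.mem_prod, mem_coe, mem_powersetCard]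
      exact ⟨⟨hS, hVα⟩, hT, by omega⟩
    · rintro ⟨S, T⟩ hST
      simp only [coe_product, Set.mem_prod, mem_coe, mem_powersetCard] at hST
      simp only [coe_filter, mem_univ, true_and, Set.mem_ofPred_eq, mem_insert_self,
        hcard S T hST.1.1 hST.2.1, hlt S T hST.1.1 hST.2.1]
      omega
    · intro V hV
      simp only [coe_filter, mem_univ, true_and, Set.mem_ofPred_eq] at hV
      exact hdecomp V hV.2.1
    · rintro ⟨S, T⟩ hST
      simp only [coe_product, Set.mem_prod, mem_coe, mem_powersetCard] at hST
      exact Prod.ext (hlt S T hST.1.1 hST.2.1) (hgt S T hST.1.1 hST.2.1)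
  rw [hsplit, card_product, card_powersetCard, card_powersetCard, Fin.card_Iio, Fin.card_Ioi]

section Occurrence

variable {n k : ℕ} {q : Perm (Fin k)} {p : Perm (Fin n)} {I : Finset (Fin n)}

theorem occursIn_iff_lt (h : I.card = k) :
    occursIn q p I ↔ ∀ j r, q j < q r ↔ p (I.orderEmbOfFin h j) < p (I.orderEmbOfFin h r) := by
  constructor
  · rintro ⟨ι, hmono, hmem, hpat⟩
    obtain rfl := orderEmbOfFin_unique h hmem fun a b => hmono a b
    exact hpat
  · exact fun hpat =>
      ⟨_, fun a b hab => (I.orderEmbOfFin h).strictMono hab, orderEmbOfFin_mem I h, hpat⟩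

theorem occursIn.apply_orderEmbOfFin (h : I.card = k) (hocc : occursIn q p I) (j : Fin k) :
    p (I.orderEmbOfFin h j) =
      (I.map p.toEmbedding).orderEmbOfFin ((card_map _).trans h) (q j) := by
  have hmono : StrictMono fun i => p (I.orderEmbOfFin h (q.symm i)) := fun i i' hii' => by
    simpa [← occursIn_iff_lt h |>.mp hocc] using hii'
  have hmem : ∀ i, p (I.orderEmbOfFin h (q.symm i)) ∈ I.map p.toEmbedding := fun i => by simp
  simpa using congrFun (orderEmbOfFin_unique _ hmem hmono) (q j)

theorem occursIn_of_apply_orderEmbOfFin (h : I.card = k) {V : Finset (Fin n)} (hV : V.card = k)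
    (hp : ∀ j, p (I.orderEmbOfFin h j) = V.orderEmbOfFin hV (q j)) : occursIn q p I :=
  (occursIn_iff_lt h).mpr fun j r => by simp [hp]

theorem occursIn.card_filter_lt (h : I.card = k) (hocc : occursIn q p I) (j : Fin k) :
    #{w ∈ I.map p.toEmbedding | w < p (I.orderEmbOfFin h j)} = q j := by
  rw [hocc.apply_orderEmbOfFin h, card_filter_lt_orderEmbOfFin]

end Occurrence

theorem Equiv.Perm.exists_comp_eq_of_eq_iff {α β : Type*} [Finite α] {u g : β → α}
    (hu : Function.Surjective u) (hug : ∀ a b, u a = u b ↔ g a = g b) :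
    ∃ σ : Perm α, σ ∘ u = g := by
  have hinj : Function.Injective (g ∘ Function.surjInv hu) := fun x y hxy => by
    simpa [Function.surjInv_eq hu] using (hug _ _).2 hxy
  exact ⟨Equiv.ofBijective _ (Finite.injective_iff_bijective.1 hinj),
    funext fun b => (hug _ _).1 (Function.surjInv_eq hu _)⟩

section Overlap

variable {α : Type*} [DecidableEq α] {A B : Finset α} {c : α}

theorem eq_iff_of_inter_eq_singleton (hAB : A ∩ B = {c}) {a b : α} (ha : a ∈ A) (hb : b ∈ B) :
    a = b ↔ a = c ∧ b = c := by
  constructor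
  · rintro rfl
    have hac : a ∈ A ∩ B := mem_inter.2 ⟨ha, hb⟩
    rw [hAB, mem_singleton] at hac
    exact ⟨hac, hac⟩
  · rintro ⟨rfl, rfl⟩
    rfl

theorem eq_insert_compl_of_union_eq_univ [Fintype α] (hcov : A ∪ B = univ)
    (hAB : A ∩ B = {c}) : B = insert c Aᶜ := by
  ext x
  have hx := Finset.ext_iff.1 hcov x
  have hcx := Finset.ext_iff.1 hAB x
  simp only [mem_union, mem_univ, iff_true, mem_inter, mem_singleton] at hx hcx
  simp only [mem_insert, mem_compl]
  tauto

end Overlap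

section TwoBlocks

variable {s k l : ℕ} {q₁ : Perm (Fin k)} {q₂ : Perm (Fin l)} {P₁ P₂ : Finset (Fin s)}
  {c : Fin s}

theorem map_eq_insert_compl_map (hcov : P₁ ∪ P₂ = univ) (hc : P₁ ∩ P₂ = {c})
    (σ : Perm (Fin s)) : P₂.map σ.toEmbedding = insert (σ c) (P₁.map σ.toEmbedding)ᶜ := by
  refine eq_insert_compl_of_union_eq_univ ?_ ?_
  · rw [← map_union, hcov, map_univ_equiv]
  · rw [← map_inter, hc, map_singleton, toEmbedding_apply]

theorem add_card_eq_of_inter_eq_singleton (h₁ : P₁.card = k) (h₂ : P₂.card = l)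
    (hcov : P₁ ∪ P₂ = univ) (hc : P₁ ∩ P₂ = {c}) : k + l = s + 1 := by
  have := card_union_add_card_inter P₁ P₂
  rwa [hcov, hc, card_univ, Fintype.card_fin, card_singleton, h₁, h₂, eq_comm] at this

theorem val_apply_of_occursIn (h₁ : P₁.card = k) (h₂ : P₂.card = l) (hcov : P₁ ∪ P₂ = univ)
    (hc : P₁ ∩ P₂ = {c}) {m₁ : Fin k} {m₂ : Fin l} (hm₁ : P₁.orderEmbOfFin h₁ m₁ = c)
    (hm₂ : P₂.orderEmbOfFin h₂ m₂ = c) {σ : Perm (Fin s)} (hσ₁ : occursIn q₁ σ P₁)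
    (hσ₂ : occursIn q₂ σ P₂) : (σ c : ℕ) = q₁ m₁ + q₂ m₂ := by
  have hr₁ := hm₁ ▸ hσ₁.card_filter_lt h₁ m₁
  have hr₂ := hm₂ ▸ hσ₂.card_filter_lt h₂ m₂
  rw [map_eq_insert_compl_map hcov hc, filter_insert, if_neg (lt_irrefl _)] at hr₂
  rw [← card_filter_lt_add_card_filter_compl_lt (P₁.map σ.toEmbedding), hr₁, hr₂]

theorem eq_of_map_eq_of_occursIn (h₁ : P₁.card = k) (h₂ : P₂.card = l) (hcov : P₁ ∪ P₂ = univ)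
    (hc : P₁ ∩ P₂ = {c}) {m₁ : Fin k} {m₂ : Fin l} (hm₁ : P₁.orderEmbOfFin h₁ m₁ = c)
    (hm₂ : P₂.orderEmbOfFin h₂ m₂ = c) {σ τ : Perm (Fin s)} (hσ₁ : occursIn q₁ σ P₁)
    (hσ₂ : occursIn q₂ σ P₂) (hτ₁ : occursIn q₁ τ P₁) (hτ₂ : occursIn q₂ τ P₂)
    (hV : P₁.map σ.toEmbedding = P₁.map τ.toEmbedding) : σ = τ := by
  have hστc : σ c = τ c := Fin.ext <|
    (val_apply_of_occursIn h₁ h₂ hcov hc hm₁ hm₂ hσ₁ hσ₂).trans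
      (val_apply_of_occursIn h₁ h₂ hcov hc hm₁ hm₂ hτ₁ hτ₂).symm
  have hW : P₂.map σ.toEmbedding = P₂.map τ.toEmbedding := by
    rw [map_eq_insert_compl_map hcov hc, map_eq_insert_compl_map hcov hc, hV, hστc]
  refine Equiv.ext fun y => ?_
  rcases mem_union.1 (hcov ▸ mem_univ y) with hy | hy
  · obtain ⟨j, rfl⟩ : y ∈ Set.range (P₁.orderEmbOfFin h₁) := by simpa using hy
    rw [hσ₁.apply_orderEmbOfFin h₁, hτ₁.apply_orderEmbOfFin h₁]
    simp only [hV]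
  · obtain ⟨j, rfl⟩ : y ∈ Set.range (P₂.orderEmbOfFin h₂) := by simpa using hy
    rw [hσ₂.apply_orderEmbOfFin h₂, hτ₂.apply_orderEmbOfFin h₂]
    simp only [hW]

theorem exists_occursIn_of_card_filter_lt (h₁ : P₁.card = k) (h₂ : P₂.card = l)
    (hcov : P₁ ∪ P₂ = univ) (hc : P₁ ∩ P₂ = {c}) {m₁ : Fin k} {m₂ : Fin l}
    (hm₁ : P₁.orderEmbOfFin h₁ m₁ = c) (hm₂ : P₂.orderEmbOfFin h₂ m₂ = c) {V : Finset (Fin s)}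
    (hV : V.card = k) {v : Fin s} (hv_val : (v : ℕ) = q₁ m₁ + q₂ m₂) (hv : v ∈ V)
    (hrank : #{w ∈ V | w < v} = q₁ m₁) :
    ∃ σ : Perm (Fin s), (occursIn q₁ σ P₁ ∧ occursIn q₂ σ P₂) ∧ P₁.map σ.toEmbedding = V := by
  have hkl := add_card_eq_of_inter_eq_singleton h₁ h₂ hcov hc
  set W := insert v Vᶜ
  have hW : W.card = l := by
    rw [card_insert_of_notMem (by simp [hv]), card_compl, Fintype.card_fin, hV]
    omega
  have hVW : V ∩ W = {v} := by
    ext w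
    simp only [W, mem_inter, mem_insert, mem_compl, mem_singleton]
    constructor
    · rintro ⟨hw, rfl | hw'⟩
      exacts [rfl, absurd hw hw']
    · rintro rfl
      exact ⟨hv, Or.inl rfl⟩
  have hv₁ : V.orderEmbOfFin hV (q₁ m₁) = v := orderEmbOfFin_eq_of_card_filter_lt hV hv hrank
  have hv₂ : W.orderEmbOfFin hW (q₂ m₂) = v := by
    refine orderEmbOfFin_eq_of_card_filter_lt hW (mem_insert_self _ _) ?_
    have := card_filter_lt_add_card_filter_compl_lt V v
    rw [filter_insert, if_neg (lt_irrefl _)]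
    omega
  have e₁ : ∀ j, P₁.orderEmbOfFin h₁ j = c ↔ j = m₁ := fun j => by
    rw [← hm₁, OrderEmbedding.eq_iff_eq]
  have e₂ : ∀ j, P₂.orderEmbOfFin h₂ j = c ↔ j = m₂ := fun j => by
    rw [← hm₂, OrderEmbedding.eq_iff_eq]
  have f₁ : ∀ j, V.orderEmbOfFin hV (q₁ j) = v ↔ j = m₁ := fun j => by
    rw [← hv₁, OrderEmbedding.eq_iff_eq, q₁.apply_eq_iff_eq]
  have f₂ : ∀ j, W.orderEmbOfFin hW (q₂ j) = v ↔ j = m₂ := fun j => by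
    rw [← hv₂, OrderEmbedding.eq_iff_eq, q₂.apply_eq_iff_eq]
  -- `σ` is prescribed on `P₁` and on `P₂`; the two prescriptions overlap exactly in `c ↦ v`.
  set u := Sum.elim (P₁.orderEmbOfFin h₁) (P₂.orderEmbOfFin h₂)
  set g := Sum.elim (V.orderEmbOfFin hV ∘ q₁) (W.orderEmbOfFin hW ∘ q₂)
  have hu : Function.Surjective u := fun y => by
    rcases mem_union.1 (hcov ▸ mem_univ y) with hy | hy
    · obtain ⟨j, rfl⟩ : y ∈ Set.range (P₁.orderEmbOfFin h₁) := by simpa using hy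
      exact ⟨.inl j, rfl⟩
    · obtain ⟨j, rfl⟩ : y ∈ Set.range (P₂.orderEmbOfFin h₂) := by simpa using hy
      exact ⟨.inr j, rfl⟩
  have hug : ∀ a b, u a = u b ↔ g a = g b := by
    rintro (j | j) (r | r)
    · simp [u, g]
    · simp only [u, g, Sum.elim_inl, Sum.elim_inr, Function.comp_apply]
      rw [eq_iff_of_inter_eq_singleton hc (orderEmbOfFin_mem P₁ h₁ j)
          (orderEmbOfFin_mem P₂ h₂ r),
        eq_iff_of_inter_eq_singleton hVW (orderEmbOfFin_mem V hV _) (orderEmbOfFin_mem W hW _),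
        e₁, e₂, f₁, f₂]
    · simp only [u, g, Sum.elim_inl, Sum.elim_inr, Function.comp_apply]
      rw [eq_comm, eq_iff_of_inter_eq_singleton hc (orderEmbOfFin_mem P₁ h₁ r)
          (orderEmbOfFin_mem P₂ h₂ j),
        eq_comm (a := W.orderEmbOfFin hW _),
        eq_iff_of_inter_eq_singleton hVW (orderEmbOfFin_mem V hV _) (orderEmbOfFin_mem W hW _),
        e₁, e₂, f₁, f₂]
    · simp [u, g]
  obtain ⟨σ, hσ⟩ := Perm.exists_comp_eq_of_eq_iff hu hug
  have hσ₁ : ∀ j, σ (P₁.orderEmbOfFin h₁ j) = V.orderEmbOfFin hV (q₁ j) :=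
    fun j => congrFun hσ (.inl j)
  have hσ₂ : ∀ j, σ (P₂.orderEmbOfFin h₂ j) = W.orderEmbOfFin hW (q₂ j) :=
    fun j => congrFun hσ (.inr j)
  refine ⟨σ, ⟨occursIn_of_apply_orderEmbOfFin h₁ hV hσ₁,
    occursIn_of_apply_orderEmbOfFin h₂ hW hσ₂⟩, ?_⟩
  refine eq_of_subset_of_card_le (fun y hy => ?_) (by rw [card_map, h₁, hV])
  obtain ⟨x, hx, rfl⟩ := Finset.mem_map.1 hy
  obtain ⟨j, rfl⟩ : x ∈ Set.range (P₁.orderEmbOfFin h₁) := by simpa using hx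
  simp [hσ₁]

theorem card_filter_occursIn_and_occursIn (h₁ : P₁.card = k) (h₂ : P₂.card = l)
    (hcov : P₁ ∪ P₂ = univ) (hc : P₁ ∩ P₂ = {c}) {m₁ : Fin k} {m₂ : Fin l}
    (hm₁ : P₁.orderEmbOfFin h₁ m₁ = c) (hm₂ : P₂.orderEmbOfFin h₂ m₂ = c) :
    #{σ : Perm (Fin s) | occursIn q₁ σ P₁ ∧ occursIn q₂ σ P₂} =
      ((q₁ m₁ : ℕ) + q₂ m₂).choose (q₁ m₁) *
        (s - 1 - q₁ m₁ - q₂ m₂).choose (k - 1 - q₁ m₁) := by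
  have hkl := add_card_eq_of_inter_eq_singleton h₁ h₂ hcov hc
  set v : Fin s := ⟨q₁ m₁ + q₂ m₂, by omega⟩
  rw [Nat.sub_sub _ (q₁ m₁ : ℕ), ← show (v : ℕ) = q₁ m₁ + q₂ m₂ from rfl,
    ← card_finsets_with_element_of_rank (q₁ m₁).isLt v]
  refine card_nbij (fun σ => P₁.map σ.toEmbedding) (fun σ hσ => ?_)
    (fun σ hσ τ hτ hστ => ?_) (fun V hV => ?_)
  · simp only [coe_filter, mem_univ, true_and, Set.mem_ofPred_eq] at hσ ⊢
    have hσc : σ c = v := Fin.ext (val_apply_of_occursIn h₁ h₂ hcov hc hm₁ hm₂ hσ.1 hσ.2)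
    refine ⟨by rw [card_map, h₁], ?_, ?_⟩
    · rw [← hσc, ← hm₁]
      exact mem_map_of_mem _ (orderEmbOfFin_mem P₁ h₁ m₁)
    · rw [← hσc, ← hm₁]
      exact hσ.1.card_filter_lt h₁ m₁
  · simp only [coe_filter, mem_univ, true_and, Set.mem_ofPred_eq] at hσ hτ
    exact eq_of_map_eq_of_occursIn h₁ h₂ hcov hc hm₁ hm₂ hσ.1 hσ.2 hτ.1 hτ.2 hστ
  · simp only [coe_filter, mem_univ, true_and, Set.mem_ofPred_eq] at hV
    obtain ⟨σ, hσ, hσV⟩ :=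
      exists_occursIn_of_card_filter_lt h₁ h₂ hcov hc hm₁ hm₂ hV.1 rfl hV.2.1 hV.2.2
    exact ⟨σ, by simpa using hσ, hσV⟩

end TwoBlocks

theorem card_filter_mul_card_eq_of_map_mul {G H : Type*} [Group G] [Group H] [Fintype G]
    [Fintype H] [DecidableEq H] (F : G → H) (φ : H →* G) (hF : ∀ g h, F (g * φ h) = F g * h)
    (R : H → Prop) [DecidablePred R] :
    #{g | R (F g)} * Fintype.card H = #{h | R h} * Fintype.card G := by
  classical
  have hfiber : ∀ h, #{g | F g = h} = #{g | F g = 1} := fun h =>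
    card_nbij' (· * φ h⁻¹) (· * φ h) (fun g hg => by simp_all [-map_inv])
      (fun g hg => by simp_all)
      (fun g _ => by simp [mul_assoc]) (fun g _ => by simp [mul_assoc])
  have hcount : ∀ (R' : H → Prop) [DecidablePred R'],
      #{g | R' (F g)} = #{h | R' h} * #{g | F g = 1} := by
    intro R' _
    rw [card_eq_sum_card_fiberwise (f := F) (t := {h | R' h}) (fun g hg => by simpa using hg)]
    refine sum_const_nat fun h hh => (congrArg card ?_).trans (hfiber h)
    ext g
    simp only [mem_filter, mem_univ, true_and, and_iff_right_iff_imp]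
    rintro rfl
    simpa using hh
  have hG := hcount (fun _ => True)
  simp only [filter_true, card_univ] at hG
  rw [hcount R, hG]
  ring

theorem Equiv.Perm.eq_of_forall_lt_iff {s : ℕ} {σ τ : Perm (Fin s)}
    (h : ∀ i j, σ i < σ j ↔ τ i < τ j) : σ = τ := by
  have hmono : StrictMono (σ ∘ τ.symm) := fun i j hij => by simpa [h] using hij
  have hid := (orderEmbOfFin_unique (card_fin s) (fun _ => mem_univ _) hmono).trans
    (orderEmbOfFin_unique (card_fin s) (fun _ => mem_univ _) strictMono_id).symm
  exact Equiv.ext fun i => by simpa using congrFun hid (τ i)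

section Standardization

variable {n s : ℕ} (J : Finset (Fin n)) (hJ : J.card = s)

/-- The standardization of `p` on `J`: the permutation of `Fin s` whose values are in the same
relative order as the entries of `p` at the positions of `J`. -/
def patternOn (p : Perm (Fin n)) : Perm (Fin s) :=
  ((J.orderIsoOfFin hJ).toEquiv.trans
      (p.subtypeEquiv fun _ => (mem_map' p.toEmbedding).symm)).trans
    ((J.map p.toEmbedding).orderIsoOfFin ((card_map _).trans hJ)).symm.toEquiv

theorem patternOn_lt_iff (p : Perm (Fin n)) (i j : Fin s) :
    patternOn J hJ p i < patternOn J hJ p j ↔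
      p (J.orderEmbOfFin hJ i) < p (J.orderEmbOfFin hJ j) := by
  simp [patternOn]

theorem extendDomain_orderIsoOfFin_apply (ρ : Perm (Fin s)) (i : Fin s) :
    ρ.extendDomain (J.orderIsoOfFin hJ).toEquiv (J.orderEmbOfFin hJ i) =
      J.orderEmbOfFin hJ (ρ i) :=
  Perm.extendDomain_apply_image ρ (J.orderIsoOfFin hJ).toEquiv i

theorem patternOn_mul_extendDomain (p : Perm (Fin n)) (ρ : Perm (Fin s)) :
    patternOn J hJ (p * ρ.extendDomain (J.orderIsoOfFin hJ).toEquiv) = patternOn J hJ p * ρ :=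
  Perm.eq_of_forall_lt_iff fun i j => by
    simp [patternOn_lt_iff, extendDomain_orderIsoOfFin_apply]

theorem occursIn_map_orderEmbOfFin_iff {k : ℕ} (q : Perm (Fin k)) (p : Perm (Fin n))
    (P : Finset (Fin s)) :
    occursIn q p (P.map (J.orderEmbOfFin hJ).toEmbedding) ↔ occursIn q (patternOn J hJ p) P := by
  constructor
  · rintro ⟨ι, hmono, hmem, hpat⟩
    choose ι' hι'P hι' using fun j => mem_map.1 (hmem j)
    refine ⟨ι', fun a b hab => ?_, hι'P, fun j r => ?_⟩
    · simpa [← hι'] using hmono a b hab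
    · simpa [patternOn_lt_iff, ← hι'] using hpat j r
  · rintro ⟨ι, hmono, hmem, hpat⟩
    refine ⟨J.orderEmbOfFin hJ ∘ ι, fun a b hab => by simpa using hmono a b hab,
      fun j => mem_map_of_mem _ (hmem j), fun j r => ?_⟩
    simpa [patternOn_lt_iff] using hpat j r

theorem card_filter_occursIn_map_mul_factorial {k l : ℕ} (q₁ : Perm (Fin k))
    (q₂ : Perm (Fin l)) (P₁ P₂ : Finset (Fin s)) :
    #{p : Perm (Fin n) | occursIn q₁ p (P₁.map (J.orderEmbOfFin hJ).toEmbedding) ∧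
        occursIn q₂ p (P₂.map (J.orderEmbOfFin hJ).toEmbedding)} * s.factorial =
      #{σ : Perm (Fin s) | occursIn q₁ σ P₁ ∧ occursIn q₂ σ P₂} * n.factorial := by
  simp only [occursIn_map_orderEmbOfFin_iff]
  have := card_filter_mul_card_eq_of_map_mul (patternOn J hJ)
    (Perm.extendDomainHom (J.orderIsoOfFin hJ).toEquiv) (patternOn_mul_extendDomain J hJ)
    (fun σ => occursIn q₁ σ P₁ ∧ occursIn q₂ σ P₂)
  rwa [Fintype.card_perm, Fintype.card_perm, Fintype.card_fin, Fintype.card_fin] at this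

end Standardization

theorem Finset.orderEmbOfFin_map {α β : Type*} [LinearOrder α] [LinearOrder β] (f : α ↪o β)
    (P : Finset α) {k : ℕ} (h : (P.map f.toEmbedding).card = k) (i : Fin k) :
    (P.map f.toEmbedding).orderEmbOfFin h i =
      f (P.orderEmbOfFin ((card_map _).symm.trans h) i) :=
  (congrFun (orderEmbOfFin_unique h (fun i => mem_map_of_mem _ (orderEmbOfFin_mem _ _ i))
    (f.strictMono.comp (orderEmbOfFin _ _).strictMono)) i).symm

theorem prob_both_occurrences_overlap_one_general (k n : ℕ)
    (q : Equiv.Perm (Fin k)) (I₁ I₂ : Finset (Fin n))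
    (h₁ : I₁.card = k) (h₂ : I₂.card = k)
    (x : Fin n) (hx : I₁ ∩ I₂ = {x})
    (a b : ℕ) (m₁ m₂ : Fin k)
    (hm₁ : (I₁.orderIsoOfFin h₁ m₁ : Fin n) = x)
    (hm₂ : (I₂.orderIsoOfFin h₂ m₂ : Fin n) = x)
    (ha : (q m₁ : ℕ) + 1 = a) (hb : (q m₂ : ℕ) + 1 = b) :
    ((univ.filter fun p : Equiv.Perm (Fin n) =>
        occursIn q p I₁ ∧ occursIn q p I₂).card : ℝ) / (n.factorial : ℝ)
      = (1 / ((2 * k - 1).factorial : ℝ)) *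
          ((a + b - 2).choose (a - 1) : ℝ) * ((2 * k - a - b).choose (k - a) : ℝ) := by
  obtain ⟨J, hJI⟩ : ∃ J, I₁ ∪ I₂ = J := ⟨_, rfl⟩
  have hJ : J.card = 2 * k - 1 := by
    have := card_union_add_card_inter I₁ I₂
    rw [hJI, hx, card_singleton, h₁, h₂] at this
    omega
  set e := J.orderEmbOfFin hJ
  have hJe : J = univ.map e.toEmbedding := (map_orderEmbOfFin_univ J hJ).symm
  obtain ⟨P₁, -, rfl⟩ := subset_map_iff.1 (hJe ▸ hJI ▸ subset_union_left)
  obtain ⟨P₂, -, rfl⟩ := subset_map_iff.1 (hJe ▸ hJI ▸ subset_union_right)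
  obtain ⟨c, -, rfl⟩ :=
    Finset.mem_map.1 (hJe ▸ hJI ▸ inter_subset_union (hx ▸ mem_singleton_self x))
  have hcov : P₁ ∪ P₂ = univ := map_injective e.toEmbedding (by rw [map_union, hJI, hJe])
  have hc : P₁ ∩ P₂ = {c} := map_injective e.toEmbedding (by rw [map_inter, hx, map_singleton])
  have hc₁ := e.injective (hm₁.symm.trans (orderEmbOfFin_map e P₁ h₁ m₁)).symm
  have hc₂ := e.injective (hm₂.symm.trans (orderEmbOfFin_map e P₂ h₂ m₂)).symm
  have hcount := card_filter_occursIn_and_occursIn (q₁ := q) (q₂ := q) _ _ hcov hc hc₁ hc₂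
  have hreduce := card_filter_occursIn_map_mul_factorial J hJ q q P₁ P₂
  rw [hcount] at hreduce
  rw [show a + b - 2 = q m₁ + q m₂ by omega, show a - 1 = q m₁ by omega,
    show 2 * k - a - b = 2 * k - 1 - 1 - q m₁ - q m₂ by omega,
    show k - a = k - 1 - q m₁ by omega]
  field_simp
  norm_cast
  rw [hreduce]
  ring

/-- Let `q` be a pattern of length `k`, let `n ≥ 2k - 1`, and let `I₁`, `I₂` be two sets
of `k` positions with `I₁ ∩ I₂ = {x}`.  Suppose `x` is the `m₁`-th smallest position of
`I₁` and the `m₂`-th smallest position of `I₂` (via the increasing enumerations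
`orderIsoOfFin`), and that in an occurrence of `q` the position `x` would hold the
`a`-th smallest entry of `I₁` (i.e. `q m₁ = a`, one-indexed) and the `b`-th smallest
entry of `I₂` (i.e. `q m₂ = b`, one-indexed).  Then the probability that, in a uniformly
random permutation of length `n`, the entries in the positions of `I₁` and those in the
positions of `I₂` both form occurrences of `q` equals
`(1/(2k-1)!) · C(a+b-2, a-1) · C(2k-a-b, k-a)`. -/
theorem prob_both_occurrences_overlap_one (k n : ℕ) (hn : 2 * k - 1 ≤ n)
    (q : Equiv.Perm (Fin k)) (I₁ I₂ : Finset (Fin n))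
    (h₁ : I₁.card = k) (h₂ : I₂.card = k)
    (x : Fin n) (hx : I₁ ∩ I₂ = {x})
    (a b : ℕ) (m₁ m₂ : Fin k)
    (hm₁ : (I₁.orderIsoOfFin h₁ m₁ : Fin n) = x)
    (hm₂ : (I₂.orderIsoOfFin h₂ m₂ : Fin n) = x)
    (ha : (q m₁ : ℕ) + 1 = a) (hb : (q m₂ : ℕ) + 1 = b) :
    ((univ.filter fun p : Equiv.Perm (Fin n) =>
        occursIn q p I₁ ∧ occursIn q p I₂).card : ℝ) / (n.factorial : ℝ)
      = (1 / ((2 * k - 1).factorial : ℝ)) *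
          ((a + b - 2).choose (a - 1) : ℝ) * ((2 * k - a - b).choose (k - a) : ℝ) :=
  prob_both_occurrences_overlap_one_general k n q I₁ I₂ h₁ h₂ x hx a b m₁ m₂ hm₁ hm₂ ha hb
end

section
/- For every positive integer k, Σ_{1≤a,b≤k} C(a+b−2, a−1)·C(2k−a−b, k−a) = (2k−1)·C(2k−2, k−1). -/
/-!
Put `a = i + 1`, `b = j + 1` and `i + i' = j + j' = k - 1`; the summand becomes
`C(i + j, i) · C(i' + j', i')`. For fixed `i` the sum over `j` is the coefficient of `X^(k-1)` in
`(1 - X)^(-(i+1)) · (1 - X)^(-(i'+1)) = (1 - X)^(-(k+1))`, namely `C(2k - 1, k)`, whatever `i` is.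
The total is therefore `k · C(2k - 1, k) = (2k - 1) · C(2k - 2, k - 1)`.
-/

open Finset PowerSeries

theorem Finset.Nat.sum_Icc_one_eq_sum_antidiagonal {M : Type*} [AddCommMonoid M] (m : ℕ)
    (f : ℕ → M) : ∑ a ∈ Icc 1 (m + 1), f a = ∑ p ∈ antidiagonal m, f (p.1 + 1) := by
  rw [Nat.sum_antidiagonal_eq_sum_range_succ_mk, range_eq_Ico, sum_Ico_add', zero_add,
    Ico_add_one_right_eq_Icc]

theorem Finset.Nat.sum_antidiagonal_add_choose_mul_add_choose (i l n : ℕ) :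
    ∑ p ∈ antidiagonal n, (i + p.1).choose i * (l + p.2).choose l
      = (i + l + 1 + n).choose (i + l + 1) := by
  have h := congrArg (fun f : ℤ⟦X⟧ ↦ coeff n f)
    (congrArg Units.val (invOneSubPow_add ℤ (i + 1) (l + 1)))
  simp only [Units.val_mul, coeff_mul, show i + 1 + (l + 1) = i + l + 1 + 1 by ring,
    invOneSubPow_val_succ_eq_mk_add_choose, coeff_mk] at h
  exact_mod_cast h.symm

/-- For every positive integer `k`,
`Σ_{1≤a,b≤k} C(a+b-2, a-1) · C(2k-a-b, k-a) = (2k-1) · C(2k-2, k-1)`. -/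
theorem sum_binomial_products (k : ℕ) (hk : 0 < k) :
    ∑ a ∈ Icc 1 k, ∑ b ∈ Icc 1 k,
        (a + b - 2).choose (a - 1) * (2 * k - a - b).choose (k - a)
      = (2 * k - 1) * (2 * k - 2).choose (k - 1) := by
  obtain ⟨m, rfl⟩ : ∃ m, k = m + 1 := ⟨k - 1, by omega⟩
  simp only [Nat.sum_Icc_one_eq_sum_antidiagonal]
  calc _ = ∑ p ∈ antidiagonal m, ∑ q ∈ antidiagonal m,
        (p.1 + q.1).choose p.1 * (p.2 + q.2).choose p.2 := by
        refine sum_congr rfl fun p hp ↦ sum_congr rfl fun q hq ↦ ?_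
        rw [HasAntidiagonal.mem_antidiagonal] at hp hq
        congr 2 <;> omega
    _ = ∑ p ∈ antidiagonal m, (2 * m + 1).choose (m + 1) := by
        refine sum_congr rfl fun p hp ↦ ?_
        rw [Nat.sum_antidiagonal_add_choose_mul_add_choose, HasAntidiagonal.mem_antidiagonal.mp hp]
        congr 1; ring
    _ = _ := by
        rw [sum_const, Nat.card_antidiagonal, smul_eq_mul, mul_comm,
          ← Nat.add_one_mul_choose_eq]
        congr 1
end

section
/- For every integer k ≥ 2, Σ_{1≤a,b≤k} C(a+b−2, a−1)²·C(2k−a−b, k−a)² > ((2k−1)!)²·k²/(k!)⁴; equivalently, the constant c_k = (1/(2k−1)!²)·Σ_{1≤a,b≤k} C(a+b−2, a−1)²·C(2k−a−b, k−a)² − k²/(k!)⁴ is strictly positive. -/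
open Finset

/-!
Write `k = n + 1` and shift indices by one, so that the summand becomes `w(i, j)²` with
`w(i, j) = C(i+j, i) · C(2n-i-j, n-i)`, the number of monotone lattice paths from `(0, 0)` to
`(n, n)` through `(i, j)`. Each of the `C(2n, n)` paths visits `2n + 1` grid points, so
`∑ w = (2n+1) · C(2n, n)` (proved by Vandermonde along each antidiagonal `i + j = s`), and
the left-hand constant is exactly `(∑ w / k)²`. Cauchy–Schwarz over the `k²` grid points gives
`(∑ w)² ≤ k² ∑ w²`, strictly because `w` is not constant: `w(0, 0) = C(2n, n) > 1 = w(0, n)`.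
-/

theorem sq_sum_lt_card_mul_sum_sq {ι R : Type*} [CommRing R] [LinearOrder R]
    [IsStrictOrderedRing R] {s : Finset ι} {f : ι → R} {p q : ι}
    (hp : p ∈ s) (hq : q ∈ s) (hpq : f p ≠ f q) :
    (∑ i ∈ s, f i) ^ 2 < #s * ∑ i ∈ s, f i ^ 2 := by
  have lagrange : ∑ i ∈ s, ∑ j ∈ s, (f i - f j) ^ 2
      = 2 * (#s * ∑ i ∈ s, f i ^ 2 - (∑ i ∈ s, f i) ^ 2) := by
    simp only [sub_sq, sum_add_distrib, sum_sub_distrib, sum_const, nsmul_eq_mul, ← mul_sum,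
      ← sum_mul]
    ring
  have spread : 0 < ∑ i ∈ s, ∑ j ∈ s, (f i - f j) ^ 2 :=
    sum_pos' (fun i _ => sum_nonneg fun j _ => sq_nonneg _)
      ⟨p, hp, sum_pos' (fun j _ => sq_nonneg _)
        ⟨q, hq, sq_pos_of_ne_zero (sub_ne_zero.2 hpq)⟩⟩
  linarith

theorem Nat.sum_range_choose_mul_choose (m l r : ℕ) :
    ∑ i ∈ range (r + 1), m.choose i * l.choose (r - i) = (m + l).choose r := by
  rw [Nat.add_choose_eq,
    Nat.sum_antidiagonal_eq_sum_range_succ (fun i j => m.choose i * l.choose j)]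

theorem Nat.sq_succ_mul_factorial_two_mul_add_one (n : ℕ) :
    (n + 1) ^ 2 * (2 * n + 1).factorial
      = (2 * n + 1) * n.centralBinom * (n + 1).factorial ^ 2 := by
  rw [Nat.factorial_succ, Nat.factorial_succ, Nat.centralBinom_eq_two_mul_choose, two_mul,
    ← Nat.add_choose_mul_factorial_mul_factorial n n]
  ring

theorem factorial_sq_mul_sq_div_factorial_pow_four (n : ℕ) :
    ((2 * n + 1).factorial : ℝ) ^ 2 * ((n + 1 : ℕ) : ℝ) ^ 2 / ((n + 1).factorial : ℝ) ^ 4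
      = ((2 * n + 1) * n.centralBinom : ℝ) ^ 2 / (n + 1) ^ 2 := by
  have key : ((n + 1) ^ 2 * (2 * n + 1).factorial : ℝ)
      = (2 * n + 1) * n.centralBinom * (n + 1).factorial ^ 2 := by
    exact_mod_cast Nat.sq_succ_mul_factorial_two_mul_add_one n
  rw [div_eq_div_iff (by positivity) (by positivity)]
  push_cast
  linear_combination ((n + 1) ^ 2 * (2 * n + 1).factorial
    + (2 * n + 1) * n.centralBinom * (n + 1).factorial ^ 2 : ℝ) * key

def pathsThrough (n i j : ℕ) : ℕ :=
  (i + j).choose i * (2 * n - (i + j)).choose (n - i)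

theorem pathsThrough_zero_zero (n : ℕ) : pathsThrough n 0 0 = n.centralBinom := by
  simp [pathsThrough, Nat.centralBinom_eq_two_mul_choose]

theorem pathsThrough_zero_self (n : ℕ) : pathsThrough n 0 n = 1 := by
  simp [pathsThrough, show 2 * n - n = n by omega]

theorem sum_range_pathsThrough {n i : ℕ} (hi : i ≤ n) :
    ∑ j ∈ range (n + 1), pathsThrough n i j
      = ∑ s ∈ range (2 * n + 1), s.choose i * (2 * n - s).choose (n - i) := by
  set g : ℕ → ℕ := fun s => s.choose i * (2 * n - s).choose (n - i)
  have below : ∑ s ∈ Ico 0 i, g s = 0 :=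
    sum_eq_zero fun s hs => by
      simp [g, Nat.choose_eq_zero_of_lt (mem_Ico.1 hs).2]
  have above : ∑ s ∈ Ico (i + n + 1) (2 * n + 1), g s = 0 :=
    sum_eq_zero fun s hs => by
      have := mem_Ico.1 hs
      simp [g, Nat.choose_eq_zero_of_lt (by omega : 2 * n - s < n - i)]
  symm
  calc ∑ s ∈ range (2 * n + 1), g s
      = ∑ s ∈ Ico 0 i, g s + ∑ s ∈ Ico i (i + n + 1), g s
          + ∑ s ∈ Ico (i + n + 1) (2 * n + 1), g s := by
        rw [sum_Ico_consecutive g (Nat.zero_le i) (by omega),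
          sum_Ico_consecutive g (by omega) (by omega), range_eq_Ico]
    _ = ∑ j ∈ range (n + 1), pathsThrough n i j := by
        rw [below, above, sum_Ico_eq_sum_range, show i + n + 1 - i = n + 1 by omega]
        simp [g, pathsThrough]

theorem sum_pathsThrough (n : ℕ) :
    ∑ p ∈ range (n + 1) ×ˢ range (n + 1), pathsThrough n p.1 p.2
      = (2 * n + 1) * n.centralBinom := by
  rw [sum_product,
    sum_congr rfl fun i hi => sum_range_pathsThrough (Nat.lt_succ_iff.1 (mem_range.1 hi)),
    sum_comm, sum_congr rfl fun s hs => ?_, sum_const, card_range, smul_eq_mul]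
  have hs : s ≤ 2 * n := Nat.lt_succ_iff.1 (mem_range.1 hs)
  rw [Nat.sum_range_choose_mul_choose, Nat.add_sub_cancel' hs,
    Nat.centralBinom_eq_two_mul_choose]

theorem sum_Icc_sum_Icc_choose_sq_eq_sum_pathsThrough_sq (n : ℕ) :
    ∑ a ∈ Icc 1 (n + 1), ∑ b ∈ Icc 1 (n + 1),
        ((a + b - 2).choose (a - 1) : ℝ) ^ 2 *
          ((2 * (n + 1) - a - b).choose (n + 1 - a) : ℝ) ^ 2
      = ∑ p ∈ range (n + 1) ×ˢ range (n + 1), (pathsThrough n p.1 p.2 : ℝ) ^ 2 := by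
  have shift (F : ℕ → ℝ) : ∑ a ∈ Icc 1 (n + 1), F a = ∑ i ∈ range (n + 1), F (i + 1) := by
    rw [range_eq_Ico, sum_Ico_add']
    rfl
  rw [shift, sum_product]
  refine sum_congr rfl fun i _ => ?_
  rw [shift]
  refine sum_congr rfl fun j _ => ?_
  rw [pathsThrough, show i + 1 + (j + 1) - 2 = i + j by omega, show i + 1 - 1 = i by omega,
    show 2 * (n + 1) - (i + 1) - (j + 1) = 2 * n - (i + j) by omega,
    show n + 1 - (i + 1) = n - i by omega]
  push_cast
  ring

/-- For every integer `k ≥ 2`,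
`Σ_{1≤a,b≤k} C(a+b-2, a-1)² · C(2k-a-b, k-a)² > ((2k-1)!)² · k² / (k!)⁴`; equivalently,
the constant
`c_k = (1/(2k-1)!²) · Σ_{1≤a,b≤k} C(a+b-2, a-1)² · C(2k-a-b, k-a)² − k²/(k!)⁴`
is strictly positive. -/
theorem c_k_positive (k : ℕ) (hk : 2 ≤ k) :
    (((2 * k - 1).factorial : ℝ) ^ 2 * (k : ℝ) ^ 2 / (k.factorial : ℝ) ^ 4
        < ∑ a ∈ Icc 1 k, ∑ b ∈ Icc 1 k,
            ((a + b - 2).choose (a - 1) : ℝ) ^ 2 * ((2 * k - a - b).choose (k - a) : ℝ) ^ 2)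
      ∧ 0 < (1 / ((2 * k - 1).factorial : ℝ) ^ 2) *
            (∑ a ∈ Icc 1 k, ∑ b ∈ Icc 1 k,
              ((a + b - 2).choose (a - 1) : ℝ) ^ 2 *
                ((2 * k - a - b).choose (k - a) : ℝ) ^ 2)
          - (k : ℝ) ^ 2 / (k.factorial : ℝ) ^ 4 := by
  obtain ⟨n, rfl⟩ : ∃ n, k = n + 1 := ⟨k - 1, by omega⟩
  rw [show 2 * (n + 1) - 1 = 2 * n + 1 by omega,
    sum_Icc_sum_Icc_choose_sq_eq_sum_pathsThrough_sq]
  set grid := range (n + 1) ×ˢ range (n + 1)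
  have hsum : ∑ p ∈ grid, (pathsThrough n p.1 p.2 : ℝ) = (2 * n + 1) * n.centralBinom := by
    exact_mod_cast sum_pathsThrough n
  have hcard : (#grid : ℝ) = (n + 1) ^ 2 := by simp [grid, sq]
  have hnonconst : (pathsThrough n 0 0 : ℝ) ≠ pathsThrough n 0 n := by
    rw [pathsThrough_zero_zero, pathsThrough_zero_self]
    have := Nat.two_le_centralBinom n (by omega)
    exact_mod_cast (by omega : n.centralBinom ≠ 1)
  have hCS := sq_sum_lt_card_mul_sum_sq (f := fun p => (pathsThrough n p.1 p.2 : ℝ))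
    (by simp [grid] : (0, 0) ∈ grid) (by simp [grid] : (0, n) ∈ grid) hnonconst
  rw [hsum, hcard] at hCS
  have hlt : ((2 * n + 1).factorial : ℝ) ^ 2 * ((n + 1 : ℕ) : ℝ) ^ 2
        / ((n + 1).factorial : ℝ) ^ 4 < ∑ p ∈ grid, (pathsThrough n p.1 p.2 : ℝ) ^ 2 := by
    rwa [factorial_sq_mul_sq_div_factorial_pow_four, div_lt_iff₀' (by positivity)]
  refine ⟨hlt, ?_⟩
  rw [sub_pos, one_div, inv_mul_eq_div, lt_div_iff₀ (by positivity)]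
  calc _ = _ := by ring
    _ < _ := hlt
end
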